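/- Let (X_n) be the once-reinforced random walk with parameter δ ≥ 0 on G = ℤ × Γ, where Γ is a finite graph. Define M_n := x̄(X_n) + δ·Σ_{k=0}^{n−1} (x̄(X_{k+1}) − x̄(X_k))·1{{X_k, X_{k+1}} ∉ E_k}, where x̄ denotes the ℤ-coordinate and E_k is the set of undirected edges crossed by the walk up to time k. Then (M_n) is a martingale with respect to the natural filtration of the walk. -/

import Mathlib

/-!
The increment of `M` from a position `x` to a neighbour `y` is `(ȳ - x̄)·(1 + δ·1{{x,y} new})`,
which vanishes for moves inside the level `x̄`. For the two horizontal moves, the transition weight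
`1 + δ·1{{x,y} crossed}` times the factor `1 + δ·1{{x,y} new}` equals `1 + δ` whether or not the edge
has been crossed, so the left and right contributions to the conditional drift cancel exactly.
-/

open MeasureTheory Finset
open scoped ENNReal Classical

/-- The cylinder graph `ℤ × Γ`. -/
def cylGraph {W : Type*} (Γ : SimpleGraph W) : SimpleGraph (ℤ × W) where
  Adj u v := (u.1 = v.1 ∧ Γ.Adj u.2 v.2) ∨ (u.2 = v.2 ∧ (v.1 = u.1 + 1 ∨ u.1 = v.1 + 1))
  symm := by
    constructor
    intro u v h
    rcases h with ⟨h1, h2⟩ | ⟨h1, h2⟩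
    · exact Or.inl ⟨h1.symm, h2.symm⟩
    · exact Or.inr ⟨h1.symm, h2.symm⟩
  loopless := by
    constructor
    intro u h
    rcases h with ⟨_, h2⟩ | ⟨_, h2⟩
    · exact (Γ.ne_of_adj h2) rfl
    · rcases h2 with h | h <;> omega

/-- The undirected edge `{x, y}` has been crossed along the finite path `w`. -/
def pathCrossed {V : Type*} {n : ℕ} (w : Fin (n+1) → V) (x y : V) : Prop :=
  ∃ k : Fin n, (w k.castSucc = x ∧ w k.succ = y) ∨ (w k.castSucc = y ∧ w k.succ = x)

/-- Once-reinforced weight of the edge from the endpoint of the path `w` to `y`: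
`1 + δ` if `{w_last, y}` has been crossed by `w`, and `1` otherwise. -/
noncomputable def orrwWeight {V : Type*} {n : ℕ} (δ : ℝ) (w : Fin (n+1) → V) (y : V) : ℝ :=
  if pathCrossed w (w (Fin.last n)) y then 1 + δ else 1

/-- The undirected edge `{x, y}` has been crossed by the walk `X` (in either direction) up to
time `n`. -/
def walkCrossed {V : Type*} {Ω : Type*} (X : ℕ → Ω → V) (ω : Ω) (n : ℕ) (x y : V) : Prop :=
  ∃ k : ℕ, 1 ≤ k ∧ k ≤ n ∧
    ((X (k-1) ω = x ∧ X k ω = y) ∨ (X (k-1) ω = y ∧ X k ω = x))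


namespace MeasureTheory

variable {Ω β : Type*} [MeasurableSpace Ω] [MeasurableSpace β] [MeasurableSingletonClass β]
  {μ : Measure Ω} {Y : Ω → β} {A : Set Ω} {N : Finset β}

theorem ae_restrict_mem_of_measure_inter_preimage_eq_zero [Countable β] (hY : Measurable Y)
    (hN : ∀ y ∉ N, μ (A ∩ Y ⁻¹' {y}) = 0) : ∀ᵐ ω ∂μ.restrict A, Y ω ∈ N := by
  rw [ae_iff]
  refine measure_mono_null (t := ⋃ y : {y // y ∉ N}, Y ⁻¹' {(y : β)})
    (fun ω hω => Set.mem_iUnion.2 ⟨⟨Y ω, hω⟩, rfl⟩) (measure_iUnion_null fun y => ?_)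
  rw [Measure.restrict_apply (hY (measurableSet_singleton _)), Set.inter_comm]
  exact hN y y.2

theorem setIntegral_comp_eq_sum [IsFiniteMeasure μ] (hY : Measurable Y)
    (hN : ∀ᵐ ω ∂μ.restrict A, Y ω ∈ N) (F : β → ℝ) :
    ∫ ω in A, F (Y ω) ∂μ = ∑ y ∈ N, μ.real (A ∩ Y ⁻¹' {y}) * F y := by
  have hfiber : ∀ y, MeasurableSet (Y ⁻¹' {y}) := fun y => hY (measurableSet_singleton y)
  calc ∫ ω in A, F (Y ω) ∂μ
      = ∫ ω in A, ∑ y ∈ N, F y * (Y ⁻¹' {y}).indicator 1 ω ∂μ := by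
        refine integral_congr_ae (hN.mono fun ω hω => ?_)
        dsimp only
        rw [sum_eq_single (Y ω) (fun y _ hy => ?_) (absurd hω)]
        · simp
        · simp [hy.symm]
    _ = ∑ y ∈ N, μ.real (A ∩ Y ⁻¹' {y}) * F y := by
        rw [integral_finsetSum _ fun y _ => ((integrable_const 1).indicator (hfiber y)).const_mul _]
        refine sum_congr rfl fun y _ => ?_
        rw [integral_const_mul, integral_indicator_one (hfiber y), measureReal_restrict_apply
          (hfiber y), Set.inter_comm, mul_comm]

end MeasureTheory

section OnceReinforced

variable {W Ω : Type*}

theorem walkCrossed_iff_pathCrossed {V : Type*} {X : ℕ → Ω → V} {ω : Ω} {n : ℕ}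
    {w : Fin (n+1) → V} (hw : ∀ k : Fin (n+1), X k ω = w k) (u v : V) :
    walkCrossed X ω n u v ↔ pathCrossed w u v := by
  constructor
  · rintro ⟨k, hk1, hkn, h⟩
    obtain ⟨j, rfl⟩ : ∃ j, k = j + 1 := ⟨k - 1, by omega⟩
    refine ⟨⟨j, by omega⟩, ?_⟩
    simpa only [← hw, Fin.val_castSucc, Fin.val_succ, Nat.add_sub_cancel] using h
  · rintro ⟨j, h⟩
    refine ⟨j + 1, by omega, by omega, ?_⟩
    simpa only [← hw, Fin.val_castSucc, Fin.val_succ, Nat.add_sub_cancel] using h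

theorem cylGraph_adj_mem {Γ : SimpleGraph W} [Fintype W] {x y : ℤ × W}
    (h : (cylGraph Γ).Adj x y) : y ∈ Icc (x.1 - 1) (x.1 + 1) ×ˢ (univ : Finset W) := by
  simp only [mem_product, mem_Icc, mem_univ, and_true]
  rcases h with ⟨h, -⟩ | ⟨-, h | h⟩ <;> omega

variable {n : ℕ} {δ : ℝ} (w : Fin (n+1) → ℤ × W)

theorem orrwWeight_nonneg (hδ : -1 ≤ δ) (y : ℤ × W) : 0 ≤ orrwWeight δ w y := by
  unfold orrwWeight
  split_ifs <;> linarith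

theorem orrwWeight_mul_one_add_ite (y : ℤ × W) :
    orrwWeight δ w y * (1 + δ * if pathCrossed w (w (Fin.last n)) y then 0 else 1) = 1 + δ := by
  unfold orrwWeight
  split_ifs <;> ring

noncomputable def orrwTotalWeight [Fintype W] (Γ : SimpleGraph W) (δ : ℝ)
    (w : Fin (n+1) → ℤ × W) : ℝ :=
  (∑ γ ∈ univ.filter (fun γ => Γ.Adj (w (Fin.last n)).2 γ),
      orrwWeight δ w ((w (Fin.last n)).1, γ))
    + orrwWeight δ w ((w (Fin.last n)).1 - 1, (w (Fin.last n)).2)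
    + orrwWeight δ w ((w (Fin.last n)).1 + 1, (w (Fin.last n)).2)

noncomputable def orrwTransition [Fintype W] (Γ : SimpleGraph W) (δ : ℝ)
    (w : Fin (n+1) → ℤ × W) (y : ℤ × W) : ℝ :=
  (if (cylGraph Γ).Adj (w (Fin.last n)) y then orrwWeight δ w y else 0) / orrwTotalWeight Γ δ w

/-- The increment `M (n+1) - M n` of the martingale when the walk has followed `w` and steps
to `y`. -/
noncomputable def orrwIncrement (δ : ℝ) (w : Fin (n+1) → ℤ × W) (y : ℤ × W) : ℝ :=
  ((y.1 - (w (Fin.last n)).1 : ℤ) : ℝ) *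
    (1 + δ * if pathCrossed w (w (Fin.last n)) y then 0 else 1)

theorem martingale_increment_eq_orrwIncrement (X : ℕ → Ω → ℤ × W) {ω : Ω}
    (hω : ∀ k : Fin (n+1), X k ω = w k) :
    ((((X (n+1) ω).1 : ℝ) + δ * ∑ k ∈ Finset.range (n+1),
        (((X (k+1) ω).1 - (X k ω).1 : ℤ) : ℝ) *
          (if walkCrossed X ω k (X k ω) (X (k+1) ω) then 0 else 1))
      - (((X n ω).1 : ℝ) + δ * ∑ k ∈ Finset.range n,
        (((X (k+1) ω).1 - (X k ω).1 : ℤ) : ℝ) *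
          (if walkCrossed X ω k (X k ω) (X (k+1) ω) then 0 else 1)))
      = orrwIncrement δ w (X (n+1) ω) := by
  have hlast : X n ω = w (Fin.last n) := by simpa using hω (Fin.last n)
  simp only [sum_range_succ, orrwIncrement, ← hlast, walkCrossed_iff_pathCrossed hω]
  push_cast
  ring

variable [Fintype W] (Γ : SimpleGraph W)

theorem orrwTransition_nonneg (hδ : -1 ≤ δ) (y : ℤ × W) : 0 ≤ orrwTransition Γ δ w y := by
  have hD : 0 ≤ orrwTotalWeight Γ δ w := by
    unfold orrwTotalWeight
    have := sum_nonneg fun γ (_ : γ ∈ univ.filter (Γ.Adj (w (Fin.last n)).2 ·)) =>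
      orrwWeight_nonneg w hδ ((w (Fin.last n)).1, γ)
    linarith [orrwWeight_nonneg w hδ ((w (Fin.last n)).1 - 1, (w (Fin.last n)).2),
      orrwWeight_nonneg w hδ ((w (Fin.last n)).1 + 1, (w (Fin.last n)).2)]
  unfold orrwTransition
  split_ifs
  · exact div_nonneg (orrwWeight_nonneg w hδ y) hD
  · simp

theorem orrwTransition_of_not_adj {y : ℤ × W} (h : ¬(cylGraph Γ).Adj (w (Fin.last n)) y) :
    orrwTransition Γ δ w y = 0 := by
  rw [orrwTransition, if_neg h, zero_div]

theorem orrwTransition_mul_orrwIncrement (y : ℤ × W) :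
    orrwTransition Γ δ w y * orrwIncrement δ w y =
      if (cylGraph Γ).Adj (w (Fin.last n)) y then
        ((y.1 - (w (Fin.last n)).1 : ℤ) : ℝ) * (1 + δ) / orrwTotalWeight Γ δ w
      else 0 := by
  by_cases h : (cylGraph Γ).Adj (w (Fin.last n)) y
  · rw [orrwTransition, if_pos h, if_pos h, div_mul_eq_mul_div, orrwIncrement, mul_left_comm,
      orrwWeight_mul_one_add_ite]
  · rw [orrwTransition, if_neg h, if_neg h, zero_div, zero_mul]

theorem sum_orrwTransition_mul_orrwIncrement {N : Finset (ℤ × W)}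
    (hL : ((w (Fin.last n)).1 - 1, (w (Fin.last n)).2) ∈ N)
    (hR : ((w (Fin.last n)).1 + 1, (w (Fin.last n)).2) ∈ N) :
    ∑ y ∈ N, orrwTransition Γ δ w y * orrwIncrement δ w y = 0 := by
  simp only [orrwTransition_mul_orrwIncrement]
  set x := w (Fin.last n)
  have hadjL : (cylGraph Γ).Adj x (x.1 - 1, x.2) := Or.inr ⟨rfl, Or.inr (by ring)⟩
  have hadjR : (cylGraph Γ).Adj x (x.1 + 1, x.2) := Or.inr ⟨rfl, Or.inl rfl⟩
  have hLR : (x.1 - 1, x.2) ≠ (x.1 + 1, x.2) := by simp only [ne_eq, Prod.mk.injEq]; omega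
  rw [sum_eq_add _ _ hLR ?_ (absurd hL) (absurd hR), if_pos hadjL, if_pos hadjR]
  · push_cast
    ring
  · rintro y - ⟨hyL, hyR⟩
    split_ifs with hadj
    · have hlevel : y.1 = x.1 := by
        rcases hadj with ⟨h, -⟩ | ⟨h, h' | h'⟩
        · exact h.symm
        · exact absurd (Prod.ext h' h.symm : y = (x.1 + 1, x.2)) hyR
        · exact absurd (Prod.ext (by omega) h.symm : y = (x.1 - 1, x.2)) hyL
      simp [hlevel]
    · rfl

end OnceReinforced

theorem stmt11_general {W : Type*} [Fintype W] [MeasurableSpace W]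
    [MeasurableSingletonClass W]
    (Γ : SimpleGraph W)
    (δ : ℝ) (hδ : 0 ≤ δ)
    {Ω : Type*} [MeasurableSpace Ω] (μ : Measure Ω) [IsProbabilityMeasure μ]
    (X : ℕ → Ω → ℤ × W) (hmeas : ∀ n, Measurable (X n))
    (hwalk : ∀ (n : ℕ) (w : Fin (n+1) → ℤ × W) (y : ℤ × W),
      μ {ω | (∀ k : Fin (n+1), X k ω = w k) ∧ X (n+1) ω = y}
        = μ {ω | ∀ k : Fin (n+1), X k ω = w k}
          * ENNReal.ofReal
            ((if (cylGraph Γ).Adj (w (Fin.last n)) y then orrwWeight δ w y else 0)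
              / ((∑ γ ∈ Finset.univ.filter (fun γ => Γ.Adj (w (Fin.last n)).2 γ),
                    orrwWeight δ w ((w (Fin.last n)).1, γ))
                  + orrwWeight δ w ((w (Fin.last n)).1 - 1, (w (Fin.last n)).2)
                  + orrwWeight δ w ((w (Fin.last n)).1 + 1, (w (Fin.last n)).2)))) :
    ∀ (n : ℕ) (w : Fin (n+1) → ℤ × W),
      ∫ ω in {ω | ∀ k : Fin (n+1), X k ω = w k},
        ((((X (n+1) ω).1 : ℝ) + δ * ∑ k ∈ Finset.range (n+1),
            (((X (k+1) ω).1 - (X k ω).1 : ℤ) : ℝ) *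
              (if walkCrossed X ω k (X k ω) (X (k+1) ω) then 0 else 1))
          - (((X n ω).1 : ℝ) + δ * ∑ k ∈ Finset.range n,
            (((X (k+1) ω).1 - (X k ω).1 : ℤ) : ℝ) *
              (if walkCrossed X ω k (X k ω) (X (k+1) ω) then 0 else 1))) ∂μ = 0 := by
  intro n w
  set A := {ω | ∀ k : Fin (n+1), X k ω = w k}
  have hA : MeasurableSet A := by
    rw [show A = ⋂ k : Fin (n+1), X k ⁻¹' {w k} by ext; simp [A]]
    exact MeasurableSet.iInter fun k => hmeas k (measurableSet_singleton _)
  have hstep (y : ℤ × W) :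
      μ (A ∩ X (n+1) ⁻¹' {y}) = μ A * ENNReal.ofReal (orrwTransition Γ δ w y) :=
    hwalk n w y
  set x := w (Fin.last n)
  set N := Icc (x.1 - 1) (x.1 + 1) ×ˢ (univ : Finset W)
  have hN : ∀ᵐ ω ∂μ.restrict A, X (n+1) ω ∈ N := by
    refine ae_restrict_mem_of_measure_inter_preimage_eq_zero (hmeas _) fun y hy => ?_
    rw [hstep, orrwTransition_of_not_adj w Γ (mt cylGraph_adj_mem hy), ENNReal.ofReal_zero,
      mul_zero]
  calc _ = ∫ ω in A, orrwIncrement δ w (X (n+1) ω) ∂μ :=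
        setIntegral_congr_fun hA fun ω hω => martingale_increment_eq_orrwIncrement w X hω
    _ = ∑ y ∈ N, μ.real (A ∩ X (n+1) ⁻¹' {y}) * orrwIncrement δ w y :=
        setIntegral_comp_eq_sum (hmeas _) hN _
    _ = μ.real A * ∑ y ∈ N, orrwTransition Γ δ w y * orrwIncrement δ w y := by
        simp only [measureReal_def, hstep, ENNReal.toReal_mul,
          ENNReal.toReal_ofReal (orrwTransition_nonneg w Γ (by linarith) _), mul_sum, mul_assoc]
    _ = 0 := by
        rw [sum_orrwTransition_mul_orrwIncrement w Γ (by simp [N, x]; omega)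
          (by simp [N, x]; omega), mul_zero]

/-- **Vervoort's martingale.** For the once-reinforced random walk `X` with parameter `δ ≥ 0`
on `ℤ × Γ`, the process
`M n = x̄(X n) + δ·Σ_{k<n} (x̄(X_{k+1}) - x̄(X_k))·1{the edge {X_k, X_{k+1}} was not yet crossed}`
is a martingale for the natural filtration of the walk: the increment `M (n+1) - M n` has zero
integral on every cylinder event of the first `n+1` positions. -/
theorem stmt11 {W : Type*} [Fintype W] [Nonempty W] [MeasurableSpace W]
    [MeasurableSingletonClass W]
    (Γ : SimpleGraph W) (hΓ : Γ.Connected)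
    (δ : ℝ) (hδ : 0 ≤ δ)
    {Ω : Type*} [MeasurableSpace Ω] (μ : Measure Ω) [IsProbabilityMeasure μ]
    (X : ℕ → Ω → ℤ × W) (hmeas : ∀ n, Measurable (X n))
    (a : ℤ × W) (h0 : ∀ ω, X 0 ω = a)
    (hwalk : ∀ (n : ℕ) (w : Fin (n+1) → ℤ × W) (y : ℤ × W),
      μ {ω | (∀ k : Fin (n+1), X k ω = w k) ∧ X (n+1) ω = y}
        = μ {ω | ∀ k : Fin (n+1), X k ω = w k}
          * ENNReal.ofReal
            ((if (cylGraph Γ).Adj (w (Fin.last n)) y then orrwWeight δ w y else 0)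
              / ((∑ γ ∈ Finset.univ.filter (fun γ => Γ.Adj (w (Fin.last n)).2 γ),
                    orrwWeight δ w ((w (Fin.last n)).1, γ))
                  + orrwWeight δ w ((w (Fin.last n)).1 - 1, (w (Fin.last n)).2)
                  + orrwWeight δ w ((w (Fin.last n)).1 + 1, (w (Fin.last n)).2)))) :
    ∀ (n : ℕ) (w : Fin (n+1) → ℤ × W),
      ∫ ω in {ω | ∀ k : Fin (n+1), X k ω = w k},
        ((((X (n+1) ω).1 : ℝ) + δ * ∑ k ∈ Finset.range (n+1),
            (((X (k+1) ω).1 - (X k ω).1 : ℤ) : ℝ) *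
              (if walkCrossed X ω k (X k ω) (X (k+1) ω) then 0 else 1))
          - (((X n ω).1 : ℝ) + δ * ∑ k ∈ Finset.range n,
            (((X (k+1) ω).1 - (X k ω).1 : ℤ) : ℝ) *
              (if walkCrossed X ω k (X k ω) (X (k+1) ω) then 0 else 1))) ∂μ = 0 :=
  stmt11_general Γ δ hδ μ X hmeas hwalk
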